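/- For all n ≥ 2, the type S_n is not (n+1)-discerning. In particular: (i) for any witness, operations assigned to processes on opposite teams must neither commute nor overwrite from q0, which forces q0 = (𝔹,0) and the teams to be assigned op_A and op_B respectively; (ii) if two team-A processes are both assigned op_A, the sequences (op_A, op_A, op_B) and (op_B) both take the object from (𝔹,0) to (𝔹,1) with op_B returning ack in both, so |A| = 1; (iii) then |B| = n, and the sequences consisting of all n op_B operations followed by op_A, versus op_A alone, both take the object from (𝔹,0) to (𝔸,0) with op_A returning ack in both, contradicting R_{A,j} ∩ R_{B,j} = ∅. -/

import Mathlib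

/-!
Processes of opposite teams must be distinguishable after their first steps from `q0`. Hence the
two teams cannot share an operation, and `q0 = (𝔹, 0)`: from any other state either `op_A`
overwrites `op_B`, or both lead to `(𝔹, 0)` and a third process cannot tell which ran first.
From `(𝔹, 0)` two `op_A`s return to `(𝔹, 0)`, so the `op_A` team is a single process; the
other `n` processes then perform `op_B` exactly `n` times, which also wraps around to `(𝔹, 0)`,
so the `op_A` process cannot tell whether it ran first or last.
-/

/-- A deterministic shared object type: states, operations, responses, and a
deterministic transition function giving new state and response. -/
structure DetType where
  State : Type
  Op : Type
  Resp : Type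
  tr : Op → State → State × Resp

namespace DetType

/-- Apply a sequence of operations to a state. -/
def applySeq (T : DetType) (l : List T.Op) (q : T.State) : T.State :=
  l.foldl (fun s o => (T.tr o s).1) q

/-- `Q_X(q0, op)`: states reachable from `q0` by applying `op_{i_1},...,op_{i_α}`
for a sequence of distinct indices whose first index is in `X`. -/
def QSet (T : DetType) {n : ℕ} (q0 : T.State) (op : Fin n → T.Op)
    (X : Finset (Fin n)) : Set T.State :=
  { q | ∃ l : List (Fin n), l.Nodup ∧ (∃ i ∈ X, l.head? = some i) ∧
      T.applySeq (l.map op) q0 = q }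

/-- `R_{X,j}`: pairs (response of `op_j`, final state) arising from sequences of
distinct indices containing `j` whose first index is in `X`, applied from `q0`. -/
def RSet (T : DetType) {n : ℕ} (q0 : T.State) (op : Fin n → T.Op)
    (X : Finset (Fin n)) (j : Fin n) : Set (T.Resp × T.State) :=
  { p | ∃ l1 l2 : List (Fin n), (l1 ++ j :: l2).Nodup ∧
      (∃ i ∈ X, (l1 ++ j :: l2).head? = some i) ∧
      p.1 = (T.tr (op j) (T.applySeq (l1.map op) q0)).2 ∧
      p.2 = T.applySeq ((l1 ++ j :: l2).map op) q0 }

/-- `T` is `n`-discerning. -/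
def isDiscerning (T : DetType) (n : ℕ) : Prop :=
  ∃ (q0 : T.State) (A B : Finset (Fin n)) (op : Fin n → T.Op),
    A.Nonempty ∧ B.Nonempty ∧ Disjoint A B ∧ A ∪ B = Finset.univ ∧
    ∀ j, T.RSet q0 op A j ∩ T.RSet q0 op B j = ∅

/-- `T` is `n`-recording. -/
def isRecording (T : DetType) (n : ℕ) : Prop :=
  ∃ (q0 : T.State) (A B : Finset (Fin n)) (op : Fin n → T.Op),
    A.Nonempty ∧ B.Nonempty ∧ Disjoint A B ∧ A ∪ B = Finset.univ ∧
    T.QSet q0 op A ∩ T.QSet q0 op B = ∅ ∧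
    (q0 ∉ T.QSet q0 op A ∨ B.card = 1) ∧
    (q0 ∉ T.QSet q0 op B ∨ A.card = 1)

end DetType

open DetType

/-- Transitions of the type `S_n`.  States are pairs (winner, row) with `true` = 𝔸,
`false` = 𝔹.  The operation `true` is `op_A`, `false` is `op_B`; both return ack. -/
def SnTr (n : ℕ) : Bool → Bool × ℕ → (Bool × ℕ) × Unit
  | true, (w, r) => (if (w, r) = (false, 0) then (true, 0) else (false, 0), ())
  | false, (w, r) => (if (r + 1) % n = 0 then (false, 0) else (w, (r + 1) % n), ())

/-- The type `S_n`. -/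
def Sn (n : ℕ) : DetType := ⟨Bool × ℕ, Bool, Unit, SnTr n⟩

namespace DetType

variable {T : DetType}

@[simp] lemma applySeq_nil (q : T.State) : T.applySeq [] q = q := rfl

@[simp] lemma applySeq_cons (o : T.Op) (l : List T.Op) (q : T.State) :
    T.applySeq (o :: l) q = T.applySeq l (T.tr o q).1 := rfl

lemma applySeq_append (l₁ l₂ : List T.Op) (q : T.State) :
    T.applySeq (l₁ ++ l₂) q = T.applySeq l₂ (T.applySeq l₁ q) :=
  List.foldl_append

lemma applySeq_replicate_succ (o : T.Op) (k : ℕ) (q : T.State) :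
    T.applySeq (List.replicate (k + 1) o) q = (T.tr o (T.applySeq (List.replicate k o) q)).1 := by
  rw [List.replicate_succ', applySeq_append]
  rfl

def RSetsDisjoint (T : DetType) {m : ℕ} (q0 : T.State) (op : Fin m → T.Op)
    (A B : Finset (Fin m)) : Prop :=
  ∀ j, T.RSet q0 op A j ∩ T.RSet q0 op B j = ∅

variable {m : ℕ} {q0 : T.State} {op : Fin m → T.Op} {A B : Finset (Fin m)}

lemma RSetsDisjoint.symm (h : T.RSetsDisjoint q0 op A B) : T.RSetsDisjoint q0 op B A :=
  fun j => Set.inter_comm _ _ ▸ h j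

lemma RSet_inter_nonempty [Subsingleton T.Resp] {l l' : List (Fin m)} {j : Fin m}
    (hl : l.Nodup) (hl' : l'.Nodup) (hA : ∃ i ∈ A, l.head? = some i)
    (hB : ∃ i ∈ B, l'.head? = some i) (hj : j ∈ l) (hj' : j ∈ l')
    (heq : T.applySeq (l.map op) q0 = T.applySeq (l'.map op) q0) :
    (T.RSet q0 op A j ∩ T.RSet q0 op B j).Nonempty := by
  obtain ⟨l₁, l₂, rfl⟩ := List.append_of_mem hj
  obtain ⟨l₁', l₂', rfl⟩ := List.append_of_mem hj'
  exact ⟨(_, _), ⟨l₁, l₂, hl, hA, rfl, rfl⟩,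
    ⟨l₁', l₂', hl', hB, Subsingleton.elim _ _, heq⟩⟩

variable [Subsingleton T.Resp]

lemma RSetsDisjoint.applySeq_ne (h : T.RSetsDisjoint q0 op A B) {l l' : List (Fin m)}
    {j : Fin m} (hl : l.Nodup) (hl' : l'.Nodup) (hA : ∃ i ∈ A, l.head? = some i)
    (hB : ∃ i ∈ B, l'.head? = some i) (hj : j ∈ l) (hj' : j ∈ l') :
    T.applySeq (l.map op) q0 ≠ T.applySeq (l'.map op) q0 := fun heq =>
  (RSet_inter_nonempty hl hl' hA hB hj hj' heq).ne_empty (h j)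

/-- A third process `k` cannot tell whether `i` or `j` moved first if their first steps lead to
the same state. -/
lemma RSetsDisjoint.tr_ne (h : T.RSetsDisjoint q0 op A B) (hm : 3 ≤ m) {i j : Fin m}
    (hi : i ∈ A) (hj : j ∈ B) : (T.tr (op i) q0).1 ≠ (T.tr (op j) q0).1 := fun heq => by
  obtain ⟨k, hki, hkj⟩ := ENat.exists_ne_ne_of_three_le (by simpa using hm) i j
  exact h.applySeq_ne (l := [i, k]) (l' := [j, k]) (j := k) (by simp [hki.symm])
    (by simp [hkj.symm]) ⟨i, hi, rfl⟩ ⟨j, hj, rfl⟩ (by simp) (by simp) (by simp [heq])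

lemma RSetsDisjoint.op_ne (h : T.RSetsDisjoint q0 op A B) (hm : 3 ≤ m) {i j : Fin m}
    (hi : i ∈ A) (hj : j ∈ B) : op i ≠ op j := fun heq =>
  h.tr_ne hm hi hj (by rw [heq])

lemma RSetsDisjoint.applySeq_append_singleton_ne (h : T.RSetsDisjoint q0 op A B)
    {l : List (Fin m)} {k : Fin m} (hl : (l ++ [k]).Nodup) (hA : ∃ i ∈ A, l.head? = some i)
    (hk : k ∈ B) :
    T.applySeq ((l ++ [k]).map op) q0 ≠ (T.tr (op k) q0).1 := by
  obtain ⟨i, hi, hhead⟩ := hA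
  simpa using h.applySeq_ne (l' := [k]) (j := k) hl (by simp) ⟨i, hi, by simp [hhead]⟩
    ⟨k, hk, rfl⟩ (by simp) (by simp)

end DetType

instance (n : ℕ) : Subsingleton (Sn n).Resp := inferInstanceAs (Subsingleton Unit)

namespace Sn

variable {n : ℕ}

lemma applySeq_replicate_opB {k : ℕ} (hk : k ≤ n) :
    (Sn n).applySeq (List.replicate k false) (false, 0) = (false, k % n) := by
  induction k with
  | zero => rfl
  | succ k ih =>
    have hk' : (false, k % n) = (false, k) := by rw [Nat.mod_eq_of_lt (by omega)]
    refine (DetType.applySeq_replicate_succ _ _ _).trans ?_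
    rw [ih (by omega), hk']
    simp only [Sn, SnTr]
    split_ifs with h <;> simp [h]

variable {q0 : (Sn n).State} {op : Fin (n + 1) → (Sn n).Op} {X Y : Finset (Fin (n + 1))}
  {x y : Fin (n + 1)}

lemma eq_init_of_RSetsDisjoint (hn : 2 ≤ n) (hq : q0.2 < n)
    (h : (Sn n).RSetsDisjoint q0 op X Y) (hX : ∀ i ∈ X, op i = true)
    (hY : ∀ i ∈ Y, op i = false) (hx : x ∈ X) (hy : y ∈ Y) : q0 = (false, 0) := by
  obtain ⟨w, r⟩ := q0
  by_contra hq0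
  replace hq0 : ¬(w = false ∧ r = 0) := fun ⟨hw, hr⟩ => hq0 (by subst hw hr; rfl)
  have hxy : x ≠ y := ne_of_apply_ne op (by rw [hX x hx, hY y hy]; nofun)
  rcases (by simp only at hq; omega : r + 1 < n ∨ r + 1 = n) with hlt | heq
  · -- `op_A` overwrites `op_B`
    apply h.symm.applySeq_append_singleton_ne (l := [y]) (by simp [hxy.symm]) ⟨y, hy, rfl⟩ hx
    show (SnTr n (op x) (SnTr n (op y) (w, r)).1).1 = (SnTr n (op x) (w, r)).1
    rw [hX x hx, hY y hy]
    simp [SnTr, hq0, Nat.mod_eq_of_lt hlt]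
  · -- both operations lead to `(𝔹, 0)`
    apply h.tr_ne (by omega) hx hy
    show (SnTr n (op x) (w, r)).1 = (SnTr n (op y) (w, r)).1
    rw [hX x hx, hY y hy]
    simp [SnTr, hq0, heq]

lemma eq_singleton_of_RSetsDisjoint (h : (Sn n).RSetsDisjoint (false, 0) op X Y)
    (hX : ∀ i ∈ X, op i = true) (hY : ∀ i ∈ Y, op i = false) (hx : x ∈ X) (hy : y ∈ Y) :
    X = {x} := by
  refine Finset.eq_singleton_iff_unique_mem.2 ⟨hx, fun x' hx' => ?_⟩
  by_contra hne
  have hXy : ∀ i ∈ X, i ≠ y := fun i hi => ne_of_apply_ne op (by rw [hX i hi, hY y hy]; nofun)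
  apply h.applySeq_append_singleton_ne (l := [x, x'])
    (by simp [Ne.symm hne, hXy x hx, hXy x' hx']) ⟨x, hx, rfl⟩ hy
  show (SnTr n (op y) (SnTr n (op x') (SnTr n (op x) (false, 0)).1).1).1
    = (SnTr n (op y) (false, 0)).1
  -- `(𝔹, 0) → (𝔸, 0) → (𝔹, 0)`
  rw [hX x hx, hX x' hx']
  rfl

lemma card_ne_of_RSetsDisjoint (h : (Sn n).RSetsDisjoint (false, 0) op X Y)
    (hY : ∀ i ∈ Y, op i = false) (hx : x ∈ X) (hy : y ∈ Y) (hxY : x ∉ Y) :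
    Y.card ≠ n := by
  intro hcard
  have hmap : Y.toList.map op = List.replicate n false :=
    List.eq_replicate_iff.2 ⟨by simp [hcard], fun b hb => by
      obtain ⟨i, hi, rfl⟩ := List.mem_map.1 hb
      exact hY i (Finset.mem_toList.1 hi)⟩
  obtain ⟨y₀, L, hL⟩ := List.exists_cons_of_ne_nil
    (Finset.toList_eq_nil.not.2 (Finset.nonempty_iff_ne_empty.1 ⟨y, hy⟩))
  apply h.symm.applySeq_append_singleton_ne (l := Y.toList)
    (by simp [List.nodup_append, Finset.nodup_toList, hxY])
    ⟨y₀, Finset.mem_toList.1 (by simp [hL]), by simp [hL]⟩ hx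
  have hwrap := applySeq_replicate_opB (n := n) le_rfl
  rw [Nat.mod_self] at hwrap
  rw [List.map_append, DetType.applySeq_append (T := Sn n) _ _ (false, 0), hmap]
  exact congrArg (fun q => ((Sn n).tr (op x) q).1) hwrap

lemma not_RSetsDisjoint (hn : 2 ≤ n) (hq : q0.2 < n) (hXY : Disjoint X Y)
    (huniv : X ∪ Y = Finset.univ) (hX : ∀ i ∈ X, op i = true) (hY : ∀ i ∈ Y, op i = false)
    (hx : x ∈ X) (hy : y ∈ Y) : ¬ (Sn n).RSetsDisjoint q0 op X Y := by
  intro h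
  obtain rfl := eq_init_of_RSetsDisjoint hn hq h hX hY hx hy
  have hcard := Finset.card_union_of_disjoint hXY
  rw [huniv, eq_singleton_of_RSetsDisjoint h hX hY hx hy] at hcard
  simp only [Finset.card_univ, Fintype.card_fin, Finset.card_singleton] at hcard
  exact card_ne_of_RSetsDisjoint h hY hx hy (Finset.disjoint_left.1 hXY hx) (by omega)

end Sn

/-- For n ≥ 2, `S_n` is not (n+1)-discerning: there is no valid state `q0`
(row below n), partition of the n+1 processes into nonempty teams A, B, and
assignment of operations with `R_{A,j} ∩ R_{B,j} = ∅` for all `j`. -/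
theorem stmt8 (n : ℕ) (hn : 2 ≤ n) :
    ¬ ∃ (q0 : (Sn n).State) (A B : Finset (Fin (n + 1))) (op : Fin (n + 1) → (Sn n).Op),
      q0.2 < n ∧ A.Nonempty ∧ B.Nonempty ∧ Disjoint A B ∧ A ∪ B = Finset.univ ∧
      ∀ j, (Sn n).RSet q0 op A j ∩ (Sn n).RSet q0 op B j = ∅ := by
  rintro ⟨q0, A, B, op, hq, ⟨a, ha⟩, ⟨b, hb⟩, hdisj, huniv, hR⟩
  have h : (Sn n).RSetsDisjoint q0 op A B := hR
  have hA : ∀ i ∈ A, op i = !op b := fun i hi => Bool.eq_not_of_ne (h.op_ne (by omega) hi hb)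
  have hB : ∀ j ∈ B, op j = !op a := fun j hj =>
    Bool.eq_not_of_ne (h.op_ne (by omega) ha hj).symm
  simp only [hA a ha] at hB
  cases hopb : op b
  · simp only [hopb, Bool.not_false] at hA hB
    exact Sn.not_RSetsDisjoint hn hq hdisj huniv hA hB ha hb h
  · simp only [hopb, Bool.not_true] at hA hB
    exact Sn.not_RSetsDisjoint hn hq hdisj.symm (by rwa [Finset.union_comm]) hB hA hb ha h.symm
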